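/- Let O be a finite set, pla : M_O → [0,∞) continuous, μ ∈ M_O with pla(μ) ≠ 0, and ε > 0. Then for every μ-normal observation stream ω ∈ O^ℕ (i.e., for each o ∈ O the relative frequency of o among the first m entries of ω converges to μ(o) as m → ∞, and no entry ω_i has μ(ω_i) = 0), there exists K such that for all m ≥ K and all ν ∈ M_O with d(ν, μ) ≥ ε, one has pla(μ)·∏_{i=1}^m μ(ω_i) > pla(ν)·∏_{i=1}^m ν(ω_i). -/

import Mathlib

/-!
Write `N_m(o)` for the number of occurrences of `o` among the first `m` observations, so that the
likelihood of `ν` is `∏_o ν(o)^{N_m(o)} = F(N_m/m, ν)^m` with `F(t, ν) = ∏_{μ(o) ≠ 0} ν(o)^{t(o)}`.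
By Gibbs' inequality `F(μ, ν) < F(μ, μ)` for `ν ≠ μ` in the simplex, so by compactness
`F(μ, ·)` stays below some `c < F(μ, μ)` on `{ν | d(ν, μ) ≥ ε}`. Since `F` is jointly continuous at
`t = μ` and `N_m/m → μ`, eventually `F(N_m/m, ν) < c < c' < F(N_m/m, μ)` for all such `ν`, and the
geometric factor `(c/c')^m` beats the bounded ratio of plausibilities.
-/

open Filter

/-- The simplex `M_O` of probability mass functions on a finite set `O`,
identified with `{x ∈ [0,1]^O | ∑ x_i = 1}`. -/
def simplex (O : Type*) [Fintype O] : Set (O → ℝ) :=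
  {x | (∀ o, 0 ≤ x o) ∧ ∑ o, x o = 1}

/-- Euclidean distance on the simplex `M_O ⊆ ℝ^O`. -/
noncomputable def euclDist {O : Type*} [Fintype O] (x y : O → ℝ) : ℝ :=
  Real.sqrt (∑ o, (x o - y o) ^ 2)

open Finset Topology

theorem IsCompact.exists_forall_lt_of_forall_lt {X α : Type*} [TopologicalSpace X] [LinearOrder α]
    [TopologicalSpace α] [OrderClosedTopology α] [DenselyOrdered α] [NoMinOrder α]
    {K : Set X} (hK : IsCompact K) {f : X → α} (hf : ContinuousOn f K) {a : α}
    (h : ∀ x ∈ K, f x < a) : ∃ c < a, ∀ x ∈ K, f x < c := by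
  rcases K.eq_empty_or_nonempty with rfl | hne
  · obtain ⟨c, hc⟩ := exists_lt a
    exact ⟨c, hc, by simp⟩
  obtain ⟨x₀, hx₀, hmax⟩ := hK.exists_isMaxOn hne hf
  obtain ⟨c, hfc, hca⟩ := exists_between (h x₀ hx₀)
  exact ⟨c, hca, fun x hx => (hmax hx).trans_lt hfc⟩

theorem eventually_mul_pow_lt_mul_pow {a b A : ℝ} (B : ℝ) (hA : 0 < A) (ha : 0 ≤ a)
    (hab : a < b) : ∀ᶠ m : ℕ in atTop, B * a ^ m < A * b ^ m := by
  have hb : 0 < b := ha.trans_lt hab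
  have hlim : Tendsto (fun m : ℕ => B * (a / b) ^ m) atTop (𝓝 0) := by
    simpa using (tendsto_pow_atTop_nhds_zero_of_lt_one (div_nonneg ha hb.le)
      ((div_lt_one hb).2 hab)).const_mul B
  filter_upwards [hlim.eventually_lt_const hA] with m hm
  calc B * a ^ m = B * (a / b) ^ m * b ^ m := by
        rw [div_pow, mul_assoc, div_mul_cancel₀ _ (pow_pos hb m).ne']
    _ < A * b ^ m := mul_lt_mul_of_pos_right hm (pow_pos hb m)

theorem continuousAt_prod_rpow {ι : Type*} (s : Finset ι) {t x : ι → ℝ} (ht : ∀ i ∈ s, 0 < t i) :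
    ContinuousAt (fun p : (ι → ℝ) × (ι → ℝ) => ∏ i ∈ s, p.2 i ^ p.1 i) (t, x) :=
  tendsto_finsetProd s fun i hi =>
    ((continuous_apply i).comp continuous_snd).continuousAt.rpow
      ((continuous_apply i).comp continuous_fst).continuousAt (Or.inr (ht i hi))

/-- Gibbs' inequality: weighted AM-GM for the ratios `ν i / μ i` with weights `μ i`. -/
theorem prod_rpow_lt_prod_rpow_self {ι : Type*} [Fintype ι] {μ ν : ι → ℝ}
    (hμ : μ ∈ stdSimplex ℝ ι) (hν : ν ∈ stdSimplex ℝ ι) (hne : ν ≠ μ) :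
    ∏ i with μ i ≠ 0, ν i ^ μ i < ∏ i with μ i ≠ 0, μ i ^ μ i := by
  set s : Finset ι := {i | μ i ≠ 0}
  have hμpos : ∀ i ∈ s, 0 < μ i := fun i hi => (hμ.1 i).lt_of_ne' (mem_filter.1 hi).2
  have hμsum : ∑ i ∈ s, μ i = 1 := (sum_filter_ne_zero _).trans hμ.2
  have hνsum : ∑ i ∈ s, ν i ≤ 1 := hν.2 ▸ sum_le_univ_sum_of_nonneg hν.1
  have hratio : ∏ i ∈ s, ν i ^ μ i = (∏ i ∈ s, (ν i / μ i) ^ μ i) * ∏ i ∈ s, μ i ^ μ i := by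
    rw [← prod_mul_distrib]
    refine prod_congr rfl fun i hi => ?_
    rw [← Real.mul_rpow (div_nonneg (hν.1 i) (hμ.1 i)) (hμ.1 i),
      div_mul_cancel₀ _ (hμpos i hi).ne']
  have hmean : ∑ i ∈ s, μ i * (ν i / μ i) = ∑ i ∈ s, ν i :=
    sum_congr rfl fun i hi => mul_div_cancel₀ _ (hμpos i hi).ne'
  have hz : ∀ i ∈ s, 0 ≤ ν i / μ i := fun i _ => div_nonneg (hν.1 i) (hμ.1 i)
  suffices ∏ i ∈ s, (ν i / μ i) ^ μ i < 1 by
    rw [hratio]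
    exact mul_lt_of_lt_one_left (prod_pos fun i hi => Real.rpow_pos_of_pos (hμpos i hi) _) this
  rcases hνsum.lt_or_eq with hlt | heq
  · exact (Real.geom_mean_le_arith_mean_weighted s μ _ (fun i hi => (hμpos i hi).le) hμsum
      hz).trans_lt (hmean ▸ hlt)
  have hamgm := Real.geom_mean_lt_arith_mean_weighted_iff_of_pos' s μ _ hμpos hμsum hz
  rw [hmean, heq] at hamgm
  refine hamgm.2 ?_
  by_contra! hall
  have hνs : ∀ i ∈ s, ν i = μ i := fun i hi => (div_eq_one_iff_eq (hμpos i hi).ne').1 (hall i hi)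
  have hνoff : ∑ i with ¬μ i ≠ 0, ν i = 0 := by
    have := sum_filter_add_sum_filter_not univ (μ · ≠ 0) ν
    rw [heq, hν.2] at this
    linarith
  refine hne (funext fun i => ?_)
  by_cases hi : μ i ≠ 0
  · exact hνs i (mem_filter.2 ⟨mem_univ i, hi⟩)
  · rw [not_not.1 hi]
    exact (sum_eq_zero_iff_of_nonneg fun j _ => hν.1 j).1 hνoff i (mem_filter.2 ⟨mem_univ i, hi⟩)

noncomputable def empiricalFreq {O : Type*} [DecidableEq O] (ω : ℕ → O) (m : ℕ) (o : O) : ℝ :=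
  (((Finset.range m).filter (fun i => ω i = o)).card : ℝ) / m

/-- For `t = empiricalFreq ω m` its `m`-th power is the likelihood `∏_{i<m} ν(ω_i)`. The product
runs over the support of `μ` only: there `t` is eventually positive, so it is jointly continuous
in `(t, ν)` at `t = μ`, which `0 ^ 0 = 1` would spoil elsewhere. -/
noncomputable def geomLikelihood {O : Type*} [Fintype O] (μ t ν : O → ℝ) : ℝ :=
  ∏ o with μ o ≠ 0, ν o ^ t o

section geomLikelihood

variable {O : Type*} [Fintype O] {μ : O → ℝ}

theorem prod_range_eq_geomLikelihood_pow [DecidableEq O] {ω : ℕ → O} {m : ℕ} (hm : m ≠ 0)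
    (hω : ∀ i < m, μ (ω i) ≠ 0) {ν : O → ℝ} (hν : ∀ o, 0 ≤ ν o) :
    ∏ i ∈ range m, ν (ω i) = geomLikelihood μ (empiricalFreq ω m) ν ^ m := by
  have hpow : ∀ o, (ν o ^ empiricalFreq ω m o) ^ m = ν o ^ #{i ∈ range m | ω i = o} := by
    intro o
    rw [← Real.rpow_natCast, ← Real.rpow_mul (hν o), empiricalFreq,
      div_mul_cancel₀ _ (Nat.cast_ne_zero.2 hm), Real.rpow_natCast]
  rw [geomLikelihood, ← prod_pow, prod_congr rfl fun o _ => hpow o, prod_comp]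
  refine prod_subset (image_subset_iff.2 fun i hi =>
    mem_filter.2 ⟨mem_univ _, hω i (mem_range.1 hi)⟩) fun o _ ho => ?_
  rw [card_eq_zero.2 (filter_eq_empty_iff.2 fun i hi hio => ho (mem_image.2 ⟨i, hi, hio⟩)),
    pow_zero]

theorem exists_eventually_geomLikelihood_gap {α : Type*} (hμ : μ ∈ stdSimplex ℝ O)
    {K : Set (O → ℝ)} (hK : IsCompact K) (hKμ : K ⊆ stdSimplex ℝ O) (hμK : μ ∉ K)
    {l : Filter α} {t : α → O → ℝ} (ht : Tendsto t l (𝓝 μ)) :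
    ∃ c c', 0 ≤ c ∧ c < c' ∧
      ∀ᶠ x in l, (∀ ν ∈ K, geomLikelihood μ (t x) ν ≤ c) ∧ c' ≤ geomLikelihood μ (t x) μ := by
  have hμpos : ∀ o ∈ ({o | μ o ≠ 0} : Finset O), 0 < μ o :=
    fun o ho => (hμ.1 o).lt_of_ne' (mem_filter.1 ho).2
  have hF : ∀ ν, ContinuousAt (fun p : (O → ℝ) × (O → ℝ) => geomLikelihood μ p.1 p.2) (μ, ν) :=
    fun ν => continuousAt_prod_rpow _ hμpos
  obtain ⟨c, hc, hKc⟩ := hK.exists_forall_lt_of_forall_lt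
    (fun ν _ => ((hF ν).comp (Continuous.prodMk_right μ).continuousAt).continuousWithinAt)
    fun ν hν => prod_rpow_lt_prod_rpow_self hμ (hKμ hν) (ne_of_mem_of_not_mem hν hμK)
  have hFμ_pos : 0 < geomLikelihood μ μ μ :=
    prod_pos fun o ho => Real.rpow_pos_of_pos (hμpos o ho) _
  obtain ⟨c', hcc', hc'⟩ := exists_between (max_lt hc hFμ_pos)
  refine ⟨max c 0, c', le_max_right c 0, hcc', ?_⟩
  have hK_ev := ht.eventually <| hK.eventually_forall_of_forall_eventually
    (P := fun t ν => geomLikelihood μ t ν < c) fun ν hν =>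
      (hF ν).eventually (gt_mem_nhds (hKc ν hν))
  have hμ_ev := ht.eventually (((hF μ).comp (f := fun t => (t, μ)) (by fun_prop)).eventually
    (lt_mem_nhds hc'))
  filter_upwards [hK_ev, hμ_ev] with x hxK hxμ
  exact ⟨fun ν hν => (hxK ν hν).le.trans (le_max_left c 0), hxμ.le⟩

end geomLikelihood

/-- For every `μ`-normal observation stream `ω` (relative frequencies converge to `μ`
and no entry has `μ`-probability zero), if `pla(μ) ≠ 0` then eventually, for every
`ν ∈ M_O` at distance at least `ε` from `μ`, the conditionalised plausibility of `μ`
strictly exceeds that of `ν`: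
`pla(μ)·∏_{i<m} μ(ω_i) > pla(ν)·∏_{i<m} ν(ω_i)`. -/
theorem normal_streams_make_true_distribution_most_plausible
    {O : Type} [Fintype O] [DecidableEq O]
    (pla : (O → ℝ) → ℝ)
    (hpla_cont : ContinuousOn pla (simplex O))
    (hpla_nonneg : ∀ ν ∈ simplex O, 0 ≤ pla ν)
    (μ : O → ℝ) (hμ : μ ∈ simplex O) (hpla : pla μ ≠ 0)
    (ε : ℝ) (hε : 0 < ε)
    (ω : ℕ → O)
    (hfreq : ∀ o : O, Tendsto
      (fun m : ℕ => (((Finset.range m).filter (fun i => ω i = o)).card : ℝ) / m)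
      atTop (nhds (μ o)))
    (hsupp : ∀ i, μ (ω i) ≠ 0) :
    ∃ K, ∀ m ≥ K, ∀ ν ∈ simplex O, ε ≤ euclDist ν μ →
      pla ν * ∏ i ∈ Finset.range m, ν (ω i) <
        pla μ * ∏ i ∈ Finset.range m, μ (ω i) := by
  set far := simplex O ∩ {ν | ε ≤ euclDist ν μ}
  have hfar : IsCompact far := (isCompact_stdSimplex ℝ O).inter_right
    (isClosed_le continuous_const (by unfold euclDist; fun_prop))
  have hμ_far : μ ∉ far := fun h => hε.not_ge (by simpa [euclDist] using h.2)
  obtain ⟨c, c', hc, hcc', hgap⟩ := exists_eventually_geomLikelihood_gap hμ hfar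
    Set.inter_subset_left hμ_far (tendsto_pi_nhds.2 hfreq : Tendsto (empiricalFreq ω) _ _)
  obtain ⟨B, hB⟩ := (isCompact_stdSimplex ℝ O).bddAbove_image hpla_cont
  have hpla_pos : 0 < pla μ := (hpla_nonneg μ hμ).lt_of_ne' hpla
  obtain ⟨K, hK⟩ := eventually_atTop.1 <| hgap.and <|
    (eventually_mul_pow_lt_mul_pow B hpla_pos hc hcc').and (eventually_ne_atTop 0)
  refine ⟨K, fun m hm ν hν hεν => ?_⟩
  obtain ⟨⟨hνc, hμc'⟩, hpow, hm0⟩ := hK m hm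
  rw [prod_range_eq_geomLikelihood_pow hm0 (fun i _ => hsupp i) hν.1,
    prod_range_eq_geomLikelihood_pow hm0 (fun i _ => hsupp i) hμ.1]
  have hν_nonneg : 0 ≤ geomLikelihood μ (empiricalFreq ω m) ν :=
    prod_nonneg fun o _ => Real.rpow_nonneg (hν.1 o) _
  have hplaν : pla ν ≤ B := hB ⟨ν, hν, rfl⟩
  calc _ ≤ B * c ^ m := mul_le_mul hplaν (pow_le_pow_left₀ hν_nonneg (hνc ν ⟨hν, hεν⟩) m)
          (pow_nonneg hν_nonneg m) ((hpla_nonneg ν hν).trans hplaν)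
    _ < pla μ * c' ^ m := hpow
    _ ≤ _ := mul_le_mul_of_nonneg_left (pow_le_pow_left₀ (hc.trans hcc'.le) hμc' m) hpla_pos.le
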